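/- Let k be a field of characteristic zero and let s, m, l, n be positive integers with l, m ≤ n and s = l + m − n ≥ 1, r = n − l + 1. In the expansion (1/s!)·Σ ε^{i₁…i_m} a_{i₁}^1 ⋯ a_{i_{r−1}}^{r−1} a_{i_r}^{k₁} ⋯ a_{i_m}^{k_s} ε_{j₁…j_l} b_{k₁}^{j₁} ⋯ b_{k_s}^{j_s} b_{m+1}^{j_{s+1}} ⋯ b_n^{j_l}, group terms by the multi-index (k₁,…,k_s) ∈ {1,…,n}^s. Then the partial sum S(k₁,…,k_s) vanishes unless {k₁,…,k_s} = {r, r+1, …, m} as sets, and when {k₁,…,k_s} = {r,…,m}, S(k₁,…,k_s) equals (1/s!)·(left order-m minor of A)·(lower order-l minor of B) times a factor making the total over all s! such orderings equal to (left order-m minor of A)·(lower order-l minor of B). -/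
import Mathlib

/-- The partial sum `S(k₁,…,k_s)` of the expansion
`Σ ε^{i₁…i_m} a_{i₁}¹⋯a_{i_{r−1}}^{r−1} a_{i_r}^{k₁}⋯a_{i_m}^{k_s}
 ε_{j₁…j_l} b_{k₁}^{j₁}⋯b_{k_s}^{j_s} b_{m+1}^{j_{s+1}}⋯b_n^{j_l}`
with the multi-index `(k₁,…,k_s)` fixed (here `s = l+m−n`, `r = n−l+1`). -/
def S16 (k : Type*) [Field k] (n l m : ℕ) (hln : l ≤ n) (hmn : m ≤ n) (hs : n < l + m)
    (A : Matrix (Fin m) (Fin n) k) (B : Matrix (Fin n) (Fin l) k)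
    (kv : Fin (l + m - n) → Fin n) : k :=
  ∑ σ : Equiv.Perm (Fin m), ∑ τ : Equiv.Perm (Fin l),
    ((Equiv.Perm.sign σ : ℤ) : k) * ((Equiv.Perm.sign τ : ℤ) : k) *
    (∏ t : Fin (n - l),
      A (σ ⟨(t : ℕ), by have := t.isLt; omega⟩) ⟨(t : ℕ), by have := t.isLt; omega⟩) *
    (∏ u : Fin (l + m - n),
      A (σ ⟨n - l + (u : ℕ), by have := u.isLt; omega⟩) (kv u)) *
    (∏ u : Fin (l + m - n), B (kv u) (τ ⟨(u : ℕ), by have := u.isLt; omega⟩)) *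
    (∏ w : Fin (n - m),
      B ⟨m + (w : ℕ), by have := w.isLt; omega⟩
        (τ ⟨l + m - n + (w : ℕ), by have := w.isLt; omega⟩))


private lemma prod_split16 {M : Type*} [CommMonoid M] {a b c : ℕ} (h : a + b = c)
    (f : Fin c → M) (g1 : Fin a → M) (g2 : Fin b → M)
    (h1 : ∀ t : Fin a, f ⟨(t : ℕ), by omega⟩ = g1 t)
    (h2 : ∀ u : Fin b, f ⟨a + (u : ℕ), by omega⟩ = g2 u) :
    ∏ j, f j = (∏ t, g1 t) * ∏ u, g2 u := by
  subst h
  rw [Fin.prod_univ_add]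
  congr 1
  · exact Finset.prod_congr rfl fun t _ => by rw [← h1 t]; congr 1
  · refine Finset.prod_congr rfl fun u _ => ?_
    rw [← h2 u]; congr 1

private lemma key16 (k : Type*) [Field k] (n l m : ℕ)
    (hln : l ≤ n) (hmn : m ≤ n) (hs : n < l + m)
    (A : Matrix (Fin m) (Fin n) k) (B : Matrix (Fin n) (Fin l) k)
    (kv : Fin (l + m - n) → Fin n)
    (col : Fin m → Fin n) (row : Fin l → Fin n)
    (hcol1 : ∀ t : Fin (n - l), col ⟨(t : ℕ), by omega⟩ = ⟨(t : ℕ), by omega⟩)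
    (hcol2 : ∀ u : Fin (l + m - n), col ⟨n - l + (u : ℕ), by omega⟩ = kv u)
    (hrow1 : ∀ u : Fin (l + m - n), row ⟨(u : ℕ), by omega⟩ = kv u)
    (hrow2 : ∀ w : Fin (n - m), row ⟨l + m - n + (w : ℕ), by omega⟩ = ⟨m + (w : ℕ), by omega⟩) :
    S16 k n l m hln hmn hs A B kv =
      (Matrix.of fun i j : Fin m => A i (col j)).det *
      (Matrix.of fun i j : Fin l => B (row j) i).det := by
  rw [Matrix.det_apply', Matrix.det_apply', Finset.sum_mul_sum]
  unfold S16
  refine Finset.sum_congr rfl fun σ _ => Finset.sum_congr rfl fun τ _ => ?_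
  have hA : (∏ j : Fin m, A (σ j) (col j)) =
      (∏ t : Fin (n - l),
        A (σ ⟨(t : ℕ), by have := t.isLt; omega⟩) ⟨(t : ℕ), by have := t.isLt; omega⟩) *
      (∏ u : Fin (l + m - n),
        A (σ ⟨n - l + (u : ℕ), by have := u.isLt; omega⟩) (kv u)) := by
    refine prod_split16 (by omega) _ _ _ (fun t => ?_) (fun u => ?_)
    · rw [hcol1 t]
    · rw [hcol2 u]
  have hB : (∏ u : Fin l, B (row u) (τ u)) =
      (∏ u : Fin (l + m - n), B (kv u) (τ ⟨(u : ℕ), by have := u.isLt; omega⟩)) *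
      (∏ w : Fin (n - m),
        B ⟨m + (w : ℕ), by have := w.isLt; omega⟩
          (τ ⟨l + m - n + (w : ℕ), by have := w.isLt; omega⟩)) := by
    refine prod_split16 (by omega) _ _ _ (fun u => ?_) (fun w => ?_)
    · rw [hrow1 u]
    · rw [hrow2 w]
  simp only [Matrix.of_apply]
  rw [hA, hB]
  ring

/-- `S(k₁,…,k_s)` vanishes unless `{k₁,…,k_s} = {r,…,m}` (0-based:
`kv` injective with range in `[n−l, m)`); and when `{k₁,…,k_s} = {r,…,m}`, it
equals (left order-`m` minor of `A`)·(lower order-`l` minor of `B`), so that the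
total over all `s!` orderings, multiplied by `1/s!`, is that product. -/
theorem stmt16 (k : Type*) [Field k] [CharZero k] (n l m : ℕ)
    (hl : 0 < l) (hm : 0 < m) (hln : l ≤ n) (hmn : m ≤ n) (hs : n < l + m)
    (A : Matrix (Fin m) (Fin n) k) (B : Matrix (Fin n) (Fin l) k)
    (kv : Fin (l + m - n) → Fin n) :
    (¬ (Function.Injective kv ∧ ∀ u, n - l ≤ (kv u : ℕ) ∧ (kv u : ℕ) < m) →
      S16 k n l m hln hmn hs A B kv = 0) ∧
    ((Function.Injective kv ∧ ∀ u, n - l ≤ (kv u : ℕ) ∧ (kv u : ℕ) < m) →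
      S16 k n l m hln hmn hs A B kv =
        Matrix.det (Matrix.of fun i j : Fin m => A i ⟨(j : ℕ), lt_of_lt_of_le j.isLt hmn⟩) *
          Matrix.det (Matrix.of fun i j : Fin l =>
            B ⟨n - l + (i : ℕ), by have := i.isLt; omega⟩ j)) := by
  classical
  set col : Fin m → Fin n := fun j =>
    if h : (j : ℕ) < n - l then ⟨(j : ℕ), by omega⟩
    else kv ⟨(j : ℕ) - (n - l), by have := j.isLt; omega⟩ with hcoldef
  set row : Fin l → Fin n := fun u =>
    if h : (u : ℕ) < l + m - n then kv ⟨(u : ℕ), h⟩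
    else ⟨m + ((u : ℕ) - (l + m - n)), by have := u.isLt; omega⟩ with hrowdef
  have hcol1 : ∀ t : Fin (n - l), col ⟨(t : ℕ), by omega⟩ = ⟨(t : ℕ), by omega⟩ := by
    intro t; simp only [hcoldef]; rw [dif_pos t.isLt]
  have hcol2 : ∀ u : Fin (l + m - n), col ⟨n - l + (u : ℕ), by omega⟩ = kv u := by
    intro u; simp only [hcoldef]
    rw [dif_neg (by omega)]
    congr 1; exact Fin.ext (by simp)
  have hrow1 : ∀ u : Fin (l + m - n), row ⟨(u : ℕ), by omega⟩ = kv u := by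
    intro u; simp only [hrowdef]; rw [dif_pos u.isLt]
  have hrow2 : ∀ w : Fin (n - m),
      row ⟨l + m - n + (w : ℕ), by omega⟩ = ⟨m + (w : ℕ), by have := w.isLt; omega⟩ := by
    intro w; simp only [hrowdef]
    rw [dif_neg (by omega)]
    exact Fin.ext (by simp)
  have hkey := key16 k n l m hln hmn hs A B kv col row hcol1 hcol2 hrow1 hrow2
  constructor
  · -- vanishing case
    intro h
    rw [hkey]
    by_cases hinj : Function.Injective kv
    · -- some kv u out of range
      push_neg at h
      obtain ⟨u, hu⟩ := h hinj
      by_cases hlo : (kv u : ℕ) < n - l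
      · -- column repeat in first matrix
        have h1 : col ⟨(kv u : ℕ), by omega⟩ = kv u := by
          simp only [hcoldef]; rw [dif_pos hlo]
        have h2 : col ⟨n - l + (u : ℕ), by have := u.isLt; omega⟩ = kv u := hcol2 u
        have hM : (Matrix.of fun i j : Fin m => A i (col j)).det = 0 := by
          rw [← Matrix.det_transpose]
          refine Matrix.det_zero_of_row_eq
            (i := (⟨(kv u : ℕ), by omega⟩ : Fin m))
            (j := (⟨n - l + (u : ℕ), by have := u.isLt; omega⟩ : Fin m))
            (fun hc => by have := Fin.mk_eq_mk.mp hc; omega) ?_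
          funext i
          simp only [Matrix.transpose_apply, Matrix.of_apply, h1, h2]
        rw [hM, zero_mul]
      · -- kv u ≥ m : row repeat in second matrix
        have hhi : m ≤ (kv u : ℕ) := hu (by omega)
        have h1 : row ⟨(u : ℕ), by have := u.isLt; omega⟩ = kv u := hrow1 u
        have h2 : row ⟨l + m - n + ((kv u : ℕ) - m), by have := (kv u).isLt; omega⟩ = kv u := by
          simp only [hrowdef]
          rw [dif_neg (by omega)]
          refine Fin.ext ?_
          simp only []
          omega
        have hM : (Matrix.of fun i j : Fin l => B (row j) i).det = 0 := by
          rw [← Matrix.det_transpose]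
          refine Matrix.det_zero_of_row_eq
            (i := (⟨(u : ℕ), by have := u.isLt; omega⟩ : Fin l))
            (j := (⟨l + m - n + ((kv u : ℕ) - m), by have := (kv u).isLt; omega⟩ : Fin l))
            (fun hc => by have := Fin.mk_eq_mk.mp hc; have := u.isLt; omega) ?_
          funext i
          simp only [Matrix.transpose_apply, Matrix.of_apply, h1, h2]
        rw [hM, mul_zero]
    · -- kv not injective
      simp only [Function.Injective, not_forall] at hinj
      obtain ⟨u, u', huv, hne⟩ := hinj
      have h1 : col ⟨n - l + (u : ℕ), by have := u.isLt; omega⟩ = kv u := hcol2 u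
      have h2 : col ⟨n - l + (u' : ℕ), by have := u'.isLt; omega⟩ = kv u' := hcol2 u'
      have hM : (Matrix.of fun i j : Fin m => A i (col j)).det = 0 := by
        rw [← Matrix.det_transpose]
        refine Matrix.det_zero_of_row_eq
          (i := (⟨n - l + (u : ℕ), by have := u.isLt; omega⟩ : Fin m))
          (j := (⟨n - l + (u' : ℕ), by have := u'.isLt; omega⟩ : Fin m))
          (fun hc => hne (Fin.ext (by have := Fin.mk_eq_mk.mp hc; omega))) ?_
        funext i
        simp only [Matrix.transpose_apply, Matrix.of_apply, h1, h2, huv]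
      rw [hM, zero_mul]
  · -- main case
    intro ⟨hinj, hrange⟩
    have hcolm : ∀ j : Fin m, (col j : ℕ) < m := by
      intro j
      by_cases hj : (j : ℕ) < n - l
      · simp only [hcoldef]; rw [dif_pos hj]; show (j : ℕ) < m; omega
      · simp only [hcoldef]; rw [dif_neg hj]; exact (hrange _).2
    have hcol_cases : ∀ j : Fin m, ¬ (j : ℕ) < n - l →
        ∃ w : Fin (l + m - n), (w : ℕ) = (j : ℕ) - (n - l) ∧ col j = kv w := by
      intro j hj
      refine ⟨⟨(j : ℕ) - (n - l), by have := j.isLt; omega⟩, rfl, ?_⟩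
      simp only [hcoldef]; rw [dif_neg hj]
    have hcolinj : Function.Injective col := by
      intro j j' hc
      by_cases h1 : (j : ℕ) < n - l <;> by_cases h2 : (j' : ℕ) < n - l
      · simp only [hcoldef] at hc
        rw [dif_pos h1, dif_pos h2] at hc
        exact Fin.ext (Fin.mk_eq_mk.mp hc)
      · obtain ⟨w, hw1, hw2⟩ := hcol_cases j' h2
        have hv : (col j : ℕ) = (j : ℕ) := by simp only [hcoldef]; rw [dif_pos h1]
        have := (hrange w).1
        rw [hc, hw2] at hv
        omega
      · obtain ⟨w, hw1, hw2⟩ := hcol_cases j h1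
        have hv : (col j' : ℕ) = (j' : ℕ) := by simp only [hcoldef]; rw [dif_pos h2]
        have := (hrange w).1
        rw [← hc, hw2] at hv
        omega
      · obtain ⟨w, hw1, hw2⟩ := hcol_cases j h1
        obtain ⟨w', hw1', hw2'⟩ := hcol_cases j' h2
        rw [hw2, hw2'] at hc
        have := Fin.val_eq_of_eq (hinj hc)
        refine Fin.ext ?_
        omega
    have hrow_ge : ∀ u : Fin l, n - l ≤ (row u : ℕ) := by
      intro u
      by_cases hu : (u : ℕ) < l + m - n
      · simp only [hrowdef]; rw [dif_pos hu]; exact (hrange _).1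
      · simp only [hrowdef]; rw [dif_neg hu]; show n - l ≤ m + _; omega
    have hrowinj : Function.Injective row := by
      intro u u' hc
      by_cases h1 : (u : ℕ) < l + m - n <;> by_cases h2 : (u' : ℕ) < l + m - n <;>
        simp only [hrowdef] at hc
      · rw [dif_pos h1, dif_pos h2] at hc
        have h3 : ((u : ℕ) : ℕ) = ((u' : ℕ) : ℕ) := Fin.mk_eq_mk.mp (hinj hc)
        exact Fin.ext h3
      · rw [dif_pos h1, dif_neg h2] at hc
        have h3 := (hrange ⟨(u : ℕ), h1⟩).2
        have h4 : (kv ⟨(u : ℕ), h1⟩ : ℕ) = m + ((u' : ℕ) - (l + m - n)) :=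
          congrArg Fin.val hc
        omega
      · rw [dif_neg h1, dif_pos h2] at hc
        have h3 := (hrange ⟨(u' : ℕ), h2⟩).2
        have h4 : m + ((u : ℕ) - (l + m - n)) = (kv ⟨(u' : ℕ), h2⟩ : ℕ) :=
          congrArg Fin.val hc
        omega
      · rw [dif_neg h1, dif_neg h2] at hc
        have := Fin.mk_eq_mk.mp hc
        exact Fin.ext (by omega)
    -- the permutations
    let κ : Equiv.Perm (Fin (l + m - n)) :=
      Equiv.ofBijective
        (fun u => (⟨(kv u : ℕ) - (n - l), by
          have := (hrange u).2; have := (hrange u).1; omega⟩ : Fin (l + m - n)))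
        (Finite.injective_iff_bijective.mp (by
          intro u u' hc
          have h1 := (hrange u).1
          have h2 := (hrange u').1
          have := Fin.mk_eq_mk.mp hc
          exact hinj (Fin.ext (by omega))))
    let π : Equiv.Perm (Fin m) :=
      Equiv.ofBijective (fun j => (⟨(col j : ℕ), hcolm j⟩ : Fin m))
        (Finite.injective_iff_bijective.mp (by
          intro j j' hc
          exact hcolinj (Fin.ext (Fin.mk_eq_mk.mp hc))))
    let ρ : Equiv.Perm (Fin l) :=
      Equiv.ofBijective (fun u => (⟨(row u : ℕ) - (n - l), by
          have := (row u).isLt; have := hrow_ge u; omega⟩ : Fin l))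
        (Finite.injective_iff_bijective.mp (by
          intro u u' hc
          have h1 := hrow_ge u
          have h2 := hrow_ge u'
          have := Fin.mk_eq_mk.mp hc
          exact hrowinj (Fin.ext (by omega))))
    -- matrix identities
    have hM1 : (Matrix.of fun i j : Fin m => A i (col j)) =
        (Matrix.of fun i j : Fin m =>
          A i ⟨(j : ℕ), lt_of_lt_of_le j.isLt hmn⟩).submatrix id π := by
      ext i j
      rfl
    have hM2 : Matrix.transpose (Matrix.of fun i j : Fin l => B (row j) i) =
        (Matrix.of fun i j : Fin l =>
          B ⟨n - l + (i : ℕ), by have := i.isLt; omega⟩ j).submatrix (⇑ρ) id := by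
      ext i j
      exact congrArg (fun x => B x j)
        (Fin.ext (show (row i : ℕ) = n - l + ((row i : ℕ) - (n - l)) by
          have := hrow_ge i; omega))
    -- signs
    have hm' : n - l + (l + m - n) = m := by omega
    have hl' : l + m - n + (n - m) = l := by omega
    have hsπ : Equiv.Perm.sign π = Equiv.Perm.sign κ := by
      have hπ : π = (finSumFinEquiv.trans (finCongr hm')).permCongr
          (Equiv.sumCongr (Equiv.refl (Fin (n - l))) κ) := by
        apply Equiv.ext
        intro j
        rw [Equiv.permCongr_apply]
        rcases lt_or_ge (j : ℕ) (n - l) with hj | hj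
        · have hsymm : (finSumFinEquiv.trans (finCongr hm')).symm j =
              Sum.inl ⟨(j : ℕ), hj⟩ := by
            rw [Equiv.symm_apply_eq]
            exact Fin.ext (by simp)
          rw [hsymm]
          refine Fin.ext ?_
          show (col j : ℕ) = _
          simp only [hcoldef]
          rw [dif_pos hj]
          simp [Equiv.sumCongr]
        · have hsymm : (finSumFinEquiv.trans (finCongr hm')).symm j =
              Sum.inr ⟨(j : ℕ) - (n - l), by have := j.isLt; omega⟩ := by
            rw [Equiv.symm_apply_eq]
            refine Fin.ext ?_
            simp
            omega
          rw [hsymm]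
          refine Fin.ext ?_
          show (col j : ℕ) = _
          simp only [hcoldef]
          rw [dif_neg (by omega)]
          simp [Equiv.sumCongr, κ, Equiv.ofBijective]
          have := (hrange ⟨(j : ℕ) - (n - l), by have := j.isLt; omega⟩).1
          omega
      rw [hπ, Equiv.Perm.sign_permCongr, Equiv.Perm.sign_sumCongr]
      simp
    have hsρ : Equiv.Perm.sign ρ = Equiv.Perm.sign κ := by
      have hρ : ρ = (finSumFinEquiv.trans (finCongr hl')).permCongr
          (Equiv.sumCongr κ (Equiv.refl (Fin (n - m)))) := by
        apply Equiv.ext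
        intro j
        rw [Equiv.permCongr_apply]
        rcases lt_or_ge (j : ℕ) (l + m - n) with hj | hj
        · have hsymm : (finSumFinEquiv.trans (finCongr hl')).symm j =
              Sum.inl ⟨(j : ℕ), hj⟩ := by
            rw [Equiv.symm_apply_eq]
            exact Fin.ext (by simp)
          rw [hsymm]
          refine Fin.ext ?_
          show (row j : ℕ) - (n - l) = _
          simp only [hrowdef]
          rw [dif_pos hj]
          simp [Equiv.sumCongr, κ, Equiv.ofBijective]
        · have hsymm : (finSumFinEquiv.trans (finCongr hl')).symm j =
              Sum.inr ⟨(j : ℕ) - (l + m - n), by have := j.isLt; omega⟩ := by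
            rw [Equiv.symm_apply_eq]
            refine Fin.ext ?_
            simp
            omega
          rw [hsymm]
          refine Fin.ext ?_
          show (row j : ℕ) - (n - l) = _
          simp only [hrowdef]
          rw [dif_neg (by omega)]
          simp [Equiv.sumCongr]
          omega
      rw [hρ, Equiv.Perm.sign_permCongr, Equiv.Perm.sign_sumCongr]
      simp
    rw [hkey, hM1, ← Matrix.det_transpose (Matrix.of fun i j : Fin l => B (row j) i),
      hM2, Matrix.det_permute', Matrix.det_permute, hsπ, hsρ]
    rcases Int.units_eq_one_or (Equiv.Perm.sign κ) with h | h <;> rw [h] <;> push_cast <;> ring
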